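/- The set of positive semidefinite d×d matrices W with rank(W) ≤ r coincides with the set of W for which there exist symmetric matrices W', S ⪰ 0 satisfying tr(W') = r, W' + S = I_d, and ⟨W, S⟩ ≤ 0. -/

import Mathlib

/-!
If `W ⪰ 0` has rank at most `r`, take `W'` to be the orthogonal projection onto `r` eigenvectors
of `W` covering its range and `S = 1 - W'`; then `W S = 0`. Conversely, for `W, S ⪰ 0` the
trace `⟨W, S⟩` is nonnegative and vanishes only when `W S = 0`, which forces
`rank W + rank S ≤ d`. Since `0 ⪯ S ⪯ 1`, every nonzero eigenvalue of `S` is at most `1`, so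
`rank S ≥ tr S = d - r`, whence `rank W ≤ r`.
-/

open Matrix Unitary
open scoped ComplexOrder

namespace Matrix

variable {𝕜 n : Type*} [RCLike 𝕜] [Fintype n]

/-- Writing `A = Xᴴ X` and `B = Yᴴ Y`, the trace of `A * B` is the squared Frobenius norm of
`X * Yᴴ`, so it vanishes only if `X * Yᴴ = 0`. -/
theorem PosSemidef.mul_eq_zero_of_trace_mul_nonpos {A B : Matrix n n 𝕜} (hA : A.PosSemidef)
    (hB : B.PosSemidef) (h : (A * B).trace ≤ 0) : A * B = 0 := by
  classical
  open scoped MatrixOrder in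
  obtain ⟨X, rfl⟩ := CStarAlgebra.nonneg_iff_eq_star_mul_self.mp hA.nonneg
  open scoped MatrixOrder in
  obtain ⟨Y, rfl⟩ := CStarAlgebra.nonneg_iff_eq_star_mul_self.mp hB.nonneg
  simp only [star_eq_conjTranspose] at h ⊢
  have htrace : (Xᴴ * X * (Yᴴ * Y)).trace = (X * Yᴴ * (X * Yᴴ)ᴴ).trace := by
    rw [conjTranspose_mul, conjTranspose_conjTranspose, ← trace_mul_cycle]
    simp only [Matrix.mul_assoc]
  have hXY : X * Yᴴ = 0 := by
    rw [htrace] at h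
    exact trace_mul_conjTranspose_self_eq_zero_iff.mp
      (le_antisymm h (posSemidef_self_mul_conjTranspose _).trace_nonneg)
  calc Xᴴ * X * (Yᴴ * Y) = Xᴴ * (X * Yᴴ) * Y := by simp only [Matrix.mul_assoc]
    _ = 0 := by rw [hXY, Matrix.mul_zero, Matrix.zero_mul]

variable [DecidableEq n]

theorem IsHermitian.eigenvalues_le_one {A : Matrix n n 𝕜} (hA : A.IsHermitian)
    (h : (1 - A).PosSemidef) (i : n) : hA.eigenvalues i ≤ 1 := by
  open scoped MatrixOrder in
  have hle : A ≤ algebraMap ℝ (Matrix n n 𝕜) 1 := by rwa [map_one, Matrix.le_iff]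
  exact (le_algebraMap_iff_spectrum_le hA.isSelfAdjoint).mp hle _
    (hA.eigenvalues_mem_spectrum_real i)

theorem IsHermitian.re_trace_le_rank {A : Matrix n n 𝕜} (hA : A.IsHermitian)
    (h : (1 - A).PosSemidef) : RCLike.re A.trace ≤ A.rank := by
  rw [hA.trace_eq_sum_eigenvalues]
  simp only [map_sum, RCLike.ofReal_re]
  rw [hA.rank_eq_card_non_zero_eigs, Fintype.card_subtype, ← Finset.sum_filter_ne_zero]
  calc ∑ i ∈ Finset.univ.filter (hA.eigenvalues · ≠ 0), hA.eigenvalues i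
      ≤ ∑ _i ∈ Finset.univ.filter (hA.eigenvalues · ≠ 0), (1 : ℝ) :=
        Finset.sum_le_sum fun i _ => hA.eigenvalues_le_one h i
    _ = _ := by simp

/-- `P` is the orthogonal projection onto the span of `r` eigenvectors of `A` that include all
those with nonzero eigenvalue. -/
theorem IsHermitian.exists_projection_mul_one_sub_eq_zero {A : Matrix n n 𝕜}
    (hA : A.IsHermitian) {r : ℕ} (hrank : A.rank ≤ r) (hr : r ≤ Fintype.card n) :
    ∃ P : Matrix n n 𝕜, P.PosSemidef ∧ (1 - P).PosSemidef ∧ P.trace = r ∧ A * (1 - P) = 0 := by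
  rw [hA.rank_eq_card_non_zero_eigs, Fintype.card_subtype] at hrank
  obtain ⟨T, hsupp, -, hT⟩ :=
    Finset.exists_subsuperset_card_eq (Finset.subset_univ _) hrank hr
  set U := hA.eigenvectorUnitary
  set f : n → 𝕜 := fun i => if i ∈ T then 1 else 0
  have hconj : ∀ D : Matrix n n 𝕜, D.PosSemidef → (conjStarAlgAut 𝕜 _ U D).PosSemidef :=
    fun D hD => by
      simpa [star_eq_conjTranspose] using hD.mul_mul_conjTranspose_same (U : Matrix n n 𝕜)
  have hdiag_compl : 1 - diagonal f = diagonal (1 - f) := by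
    rw [← diagonal_one, diagonal_sub]; rfl
  refine ⟨conjStarAlgAut 𝕜 _ U (diagonal f), ?_, ?_, ?_, ?_⟩
  · exact hconj _ (posSemidef_diagonal_iff.mpr fun i => by simp only [f]; split <;> simp)
  · rw [← map_one (conjStarAlgAut 𝕜 _ U), ← map_sub, hdiag_compl]
    exact hconj _ (posSemidef_diagonal_iff.mpr fun i => by
      simp only [f, Pi.sub_apply]; split <;> simp)
  · rw [conjStarAlgAut_apply, trace_mul_cycle, Unitary.coe_star_mul_self, Matrix.one_mul,
      trace_diagonal, Finset.sum_boole, Finset.filter_mem_eq_inter, Finset.univ_inter, hT]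
  · conv_lhs => rw [hA.spectral_theorem]
    rw [← map_one (conjStarAlgAut 𝕜 _ U), ← map_sub, ← map_mul, hdiag_compl, diagonal_mul_diagonal]
    convert map_zero (conjStarAlgAut 𝕜 _ U)
    rw [← diagonal_zero, diagonal_eq_diagonal_iff]
    intro i
    by_cases hi : i ∈ T
    · simp [f, hi]
    · have : hA.eigenvalues i = 0 := by
        by_contra hne
        exact hi (hsupp (Finset.mem_filter.mpr ⟨Finset.mem_univ i, hne⟩))
      simp [this]

end Matrix

/-- The set of PSD W with rank(W) ≤ r coincides with the set of PSD W for which there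
exist W', S ⪰ 0 with tr(W') = r, W' + S = I and ⟨W, S⟩ ≤ 0. -/
theorem stmt_12 (d r : ℕ) (hr : r ≤ d) :
    {W : Matrix (Fin d) (Fin d) ℝ | W.PosSemidef ∧ W.rank ≤ r} =
    {W : Matrix (Fin d) (Fin d) ℝ | W.PosSemidef ∧
      ∃ W' S : Matrix (Fin d) (Fin d) ℝ, W'.PosSemidef ∧ S.PosSemidef ∧
        W'.trace = (r : ℝ) ∧ W' + S = 1 ∧ (Wᵀ * S).trace ≤ 0} := by
  ext W
  have hWT {W : Matrix (Fin d) (Fin d) ℝ} (hW : W.PosSemidef) : Wᵀ = W := hW.1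
  constructor
  · rintro ⟨hW, hrank⟩
    obtain ⟨P, hP, hQ, htr, hWP⟩ :=
      hW.1.exists_projection_mul_one_sub_eq_zero hrank (by simpa using hr)
    exact ⟨hW, P, 1 - P, hP, hQ, htr, add_sub_cancel _ _, by rw [hWT hW, hWP, trace_zero]⟩
  · rintro ⟨hW, W', S, hW', hS, htr, hsum, hWS⟩
    refine ⟨hW, ?_⟩
    have hrank := rank_add_rank_le_card_of_mul_eq_zero
      (hW.mul_eq_zero_of_trace_mul_nonpos hS (by rwa [hWT hW] at hWS))
    have htrS : S.trace = d - r := by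
      have := congrArg trace hsum
      rw [trace_add, trace_one, htr, Fintype.card_fin] at this
      linarith
    have hrankS : (d : ℝ) - r ≤ S.rank := by
      simpa [htrS] using hS.1.re_trace_le_rank (by rwa [← hsum, add_sub_cancel_right])
    rw [Fintype.card_fin] at hrank
    have : d ≤ r + S.rank := by exact_mod_cast (by linarith : (d : ℝ) ≤ r + S.rank)
    omega
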